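/- Let λ and μ be partitions of the same positive integer d. Then: (i) if ℓ(λ) > ℓ(μ) and λ ≻ μ, then λ* ⪰ μ; (ii) if ℓ(λ) > ℓ(μ) and λ covers μ in the superdominance order, then μ = λ*; (iii) if ℓ(λ) ≥ 2, then λ covers λ* in the superdominance order if and only if λ_1 − λ_2 ≤ 1. -/

import Mathlib

open scoped BigOperators

/-- The parts of a partition listed in increasing order. -/
def partsAsc {d : ℕ} (lam : Nat.Partition d) : List ℕ :=
  lam.parts.sort (· ≤ ·)

/-- The parts of a partition listed in decreasing order. -/
def partsDesc {d : ℕ} (lam : Nat.Partition d) : List ℕ :=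
  (partsAsc lam).reverse

/-- The number of parts of a partition. -/
def len {d : ℕ} (lam : Nat.Partition d) : ℕ :=
  Multiset.card lam.parts

/-- `lam` superdominates `mu`. -/
def SuperDominates {d : ℕ} (lam mu : Nat.Partition d) : Prop :=
  ∀ j : ℕ, 1 ≤ j → j ≤ min (len lam) (len mu) →
    ((partsAsc lam).take j).sum ≤ ((partsAsc mu).take j).sum

/-- `lam ≻ mu`: strict superdominance. -/
def StrictSuperDominates {d : ℕ} (lam mu : Nat.Partition d) : Prop :=
  SuperDominates lam mu ∧ lam ≠ mu

/-- `lam` covers `mu` in the superdominance order. -/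
def SCovers {d : ℕ} (lam mu : Nat.Partition d) : Prop :=
  StrictSuperDominates lam mu ∧
    ¬ ∃ nu : Nat.Partition d, StrictSuperDominates lam nu ∧ StrictSuperDominates nu mu

/-- The multiset of parts of `λ*`, the partition obtained from `λ` by merging its two
largest parts `λ₁, λ₂` into the single part `λ₁ + λ₂`. -/
def starParts {d : ℕ} (lam : Nat.Partition d) : Multiset ℕ :=
  ((partsDesc lam).getD 0 0 + (partsDesc lam).getD 1 0) ::ₘ
    (((partsDesc lam).drop 2 : List ℕ) : Multiset ℕ)

section Aux

variable {d : ℕ}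

lemma partsAsc_sorted (lam : Nat.Partition d) : (partsAsc lam).Pairwise (· ≤ ·) :=
  Multiset.pairwise_sort _ _

lemma partsAsc_coe (lam : Nat.Partition d) : (↑(partsAsc lam) : Multiset ℕ) = lam.parts :=
  Multiset.sort_eq _ _

lemma partsAsc_length (lam : Nat.Partition d) : (partsAsc lam).length = len lam :=
  Multiset.length_sort _

lemma partsAsc_sum (lam : Nat.Partition d) : (partsAsc lam).sum = d := by
  have h := lam.parts_sum
  rw [← partsAsc_coe, Multiset.sum_coe] at h
  exact h

lemma partsAsc_pos (lam : Nat.Partition d) {x : ℕ} (hx : x ∈ partsAsc lam) : 0 < x :=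
  lam.parts_pos (by rw [← partsAsc_coe]; exact_mod_cast hx)

/-- If partsAsc lists agree, the partitions agree. -/
lemma eq_of_partsAsc_eq {lam mu : Nat.Partition d} (h : partsAsc lam = partsAsc mu) :
    lam = mu := by
  apply Nat.Partition.ext
  rw [← partsAsc_coe lam, ← partsAsc_coe mu, h]

/-- A sorted list of positive naturals whose coercion is the parts gives partsAsc. -/
lemma partsAsc_eq_of_sorted {lam : Nat.Partition d} {l : List ℕ}
    (hs : l.Pairwise (· ≤ ·)) (hc : (↑l : Multiset ℕ) = lam.parts) : partsAsc lam = l := by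
  apply List.Perm.eq_of_pairwise' (partsAsc_sorted lam) hs
  rw [← Multiset.coe_eq_coe, partsAsc_coe, hc]

lemma take_sum_le (l : List ℕ) (j : ℕ) : (l.take j).sum ≤ l.sum := by
  conv_rhs => rw [← List.take_append_drop j l]
  rw [List.sum_append]
  exact Nat.le_add_right _ _

lemma take_sum_lt (l : List ℕ) (hpos : ∀ x ∈ l, 0 < x) {j : ℕ} (hj : j < l.length) :
    (l.take j).sum < l.sum := by
  conv_rhs => rw [← List.take_append_drop j l]
  rw [List.sum_append]
  have hne : l.drop j ≠ [] := by
    intro h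
    have := List.length_drop (i := j) (l := l)
    rw [h] at this
    simp at this
    omega
  obtain ⟨y, hmem⟩ := List.exists_mem_of_ne_nil _ hne
  have hpos' : 0 < (l.drop j).sum :=
    lt_of_lt_of_le (hpos _ (List.mem_of_mem_drop hmem)) (List.single_le_sum (by simp) _ hmem)
  omega

lemma sum_take_succ_getD (l : List ℕ) {j : ℕ} (hj : j < l.length) :
    (l.take (j + 1)).sum = (l.take j).sum + l.getD j 0 := by
  rw [List.sum_take_succ l j hj, List.getD_eq_getElem l 0 hj]

/-- lists of same length with equal partial sums are equal. -/
lemma list_eq_of_take_sums {l₁ l₂ : List ℕ} (hlen : l₁.length = l₂.length)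
    (h : ∀ j, (l₁.take j).sum = (l₂.take j).sum) : l₁ = l₂ := by
  apply List.ext_getElem hlen
  intro n h₁ h₂
  have e1 := List.sum_take_succ l₁ n h₁
  have e2 := List.sum_take_succ l₂ n h₂
  have := h n
  have := h (n + 1)
  omega

/-- elements of `take j` of a sorted list are at most the `j`-th element. -/
lemma mem_take_le_getD {l : List ℕ} (hs : l.Pairwise (· ≤ ·)) {j : ℕ} (hj : j < l.length)
    {x : ℕ} (hx : x ∈ l.take j) : x ≤ l.getD j 0 := by
  rw [List.mem_iff_getElem] at hx
  obtain ⟨i, hi, rfl⟩ := hx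
  rw [List.getElem_take, List.getD_eq_getElem l 0 hj]
  have hij : i < j := by
    have := List.length_take (i := j) (l := l)
    omega
  exact List.pairwise_iff_getElem.mp hs i j _ hj hij

lemma len_pos (hd : 0 < d) (lam : Nat.Partition d) : 1 ≤ len lam := by
  by_contra h
  have h0 : len lam = 0 := by omega
  have := partsAsc_sum lam
  have hl := partsAsc_length lam
  rw [h0, List.length_eq_zero_iff] at hl
  rw [hl] at this
  simp at this
  omega

/-- superdominance is antisymmetric. -/
lemma superdominates_antisymm (hd : 0 < d) {lam mu : Nat.Partition d}
    (h1 : SuperDominates lam mu) (h2 : SuperDominates mu lam) : lam = mu := by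
  have hl1 := len_pos hd lam
  have hl2 := len_pos hd mu
  have hlen : len lam = len mu := by
    rcases le_or_gt (len lam) (len mu) with hle | hlt
    · by_contra hne
      have hlt : len lam < len mu := by omega
      have e1 : ((partsAsc lam).take (len lam)).sum = d := by
        rw [← partsAsc_length, List.take_length, partsAsc_sum]
      have e2 : ((partsAsc mu).take (len lam)).sum < d := by
        have := take_sum_lt (partsAsc mu) (fun x hx => partsAsc_pos mu hx)
          (j := len lam) (by rw [partsAsc_length]; omega)
        rw [partsAsc_sum] at this; exact this
      have := h1 (len lam) (by omega) (by omega)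
      omega
    · exfalso
      have e1 : ((partsAsc mu).take (len mu)).sum = d := by
        rw [← partsAsc_length, List.take_length, partsAsc_sum]
      have e2 : ((partsAsc lam).take (len mu)).sum < d := by
        have := take_sum_lt (partsAsc lam) (fun x hx => partsAsc_pos lam hx)
          (j := len mu) (by rw [partsAsc_length]; omega)
        rw [partsAsc_sum] at this; exact this
      have := h2 (len mu) (by omega) (by omega)
      omega
  apply eq_of_partsAsc_eq
  apply list_eq_of_take_sums (by rw [partsAsc_length, partsAsc_length, hlen])
  intro j
  rcases Nat.eq_zero_or_pos j with rfl | hj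
  · simp
  rcases le_or_gt j (len lam) with hle | hlt
  · exact le_antisymm (h1 j hj (by omega)) (h2 j (by omega) (by omega))
  · have t1 : (partsAsc lam).take j = partsAsc lam :=
      List.take_of_length_le (by rw [partsAsc_length]; omega)
    have t2 : (partsAsc mu).take j = partsAsc mu :=
      List.take_of_length_le (by rw [partsAsc_length]; omega)
    rw [t1, t2, partsAsc_sum, partsAsc_sum]

end Aux

section Star

variable {d : ℕ} (lam : Nat.Partition d)

/-- abbreviations for the two largest parts -/
noncomputable def topA : ℕ := (partsAsc lam).getD ((partsAsc lam).length - 1) 0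
noncomputable def topB : ℕ := (partsAsc lam).getD ((partsAsc lam).length - 2) 0

lemma desc_getD_zero (hL : 1 ≤ len lam) : (partsDesc lam).getD 0 0 = topA lam := by
  have hlen : (partsAsc lam).length = len lam := partsAsc_length lam
  unfold partsDesc topA
  rw [List.getD_eq_getElem _ 0 (by simp [hlen]; omega),
      List.getD_eq_getElem _ 0 (by omega), List.getElem_reverse]
  congr 1

lemma desc_getD_one (hL : 2 ≤ len lam) : (partsDesc lam).getD 1 0 = topB lam := by
  have hlen : (partsAsc lam).length = len lam := partsAsc_length lam
  unfold partsDesc topB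
  rw [List.getD_eq_getElem _ 0 (by simp [hlen]; omega),
      List.getD_eq_getElem _ 0 (by omega), List.getElem_reverse]
  congr 1

/-- the star list: the small parts followed by the merged part -/
noncomputable def starList : List ℕ :=
  (partsAsc lam).take (len lam - 2) ++ [topA lam + topB lam]

lemma topB_le_topA (hL : 2 ≤ len lam) : topB lam ≤ topA lam := by
  have hlen : (partsAsc lam).length = len lam := partsAsc_length lam
  unfold topA topB
  rw [List.getD_eq_getElem _ 0 (by omega), List.getD_eq_getElem _ 0 (by omega)]
  exact List.pairwise_iff_getElem.mp (partsAsc_sorted lam) _ _ _ _ (by omega)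

lemma mem_take_le_topB (hL : 2 ≤ len lam) {x : ℕ}
    (hx : x ∈ (partsAsc lam).take (len lam - 2)) : x ≤ topB lam := by
  have hlen : (partsAsc lam).length = len lam := partsAsc_length lam
  unfold topB
  rw [show (partsAsc lam).length - 2 = len lam - 2 by omega]
  exact mem_take_le_getD (partsAsc_sorted lam) (by omega) hx

lemma starList_sorted (hL : 2 ≤ len lam) : (starList lam).Pairwise (· ≤ ·) := by
  unfold starList
  rw [List.pairwise_append]
  refine ⟨(partsAsc_sorted lam).sublist (List.take_sublist _ _), by simp, ?_⟩
  intro x hx y hy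
  simp only [List.mem_singleton] at hy
  subst hy
  have := mem_take_le_topB lam hL hx
  omega

lemma starList_coe (hL : 2 ≤ len lam) : (↑(starList lam) : Multiset ℕ) = starParts lam := by
  have hlen : (partsAsc lam).length = len lam := partsAsc_length lam
  unfold starList starParts
  rw [desc_getD_zero lam (by omega), desc_getD_one lam hL]
  have hdrop : (partsDesc lam).drop 2 = ((partsAsc lam).take (len lam - 2)).reverse := by
    unfold partsDesc
    rw [List.drop_reverse, hlen]
  rw [hdrop]
  rw [show ((((partsAsc lam).take (len lam - 2)).reverse : List ℕ) : Multiset ℕ)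
      = (((partsAsc lam).take (len lam - 2) : List ℕ) : Multiset ℕ) from Multiset.coe_reverse _]
  rw [Multiset.cons_coe, Multiset.coe_eq_coe]
  exact List.perm_append_singleton _ _

lemma sum_take_sub_two (hL : 2 ≤ len lam) :
    ((partsAsc lam).take (len lam - 2)).sum + topB lam + topA lam = d := by
  have hlen : (partsAsc lam).length = len lam := partsAsc_length lam
  have e1 : ((partsAsc lam).take ((len lam - 2) + 1)).sum
      = ((partsAsc lam).take (len lam - 2)).sum + topB lam := by
    rw [sum_take_succ_getD _ (by omega)]
    unfold topB
    rw [show (partsAsc lam).length - 2 = len lam - 2 by omega]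
  have e2 : ((partsAsc lam).take ((len lam - 1) + 1)).sum
      = ((partsAsc lam).take (len lam - 1)).sum + topA lam := by
    rw [sum_take_succ_getD _ (by omega)]
    unfold topA
    rw [show (partsAsc lam).length - 1 = len lam - 1 by omega]
  rw [show (len lam - 2) + 1 = len lam - 1 from by omega] at e1
  rw [show (len lam - 1) + 1 = len lam from by omega] at e2
  have e3 : ((partsAsc lam).take (len lam)).sum = d := by
    rw [← hlen, List.take_length, partsAsc_sum]
  omega

lemma starList_sum (hL : 2 ≤ len lam) : (starList lam).sum = d := by
  unfold starList
  rw [List.sum_append]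
  have := sum_take_sub_two lam hL
  simp
  omega

lemma starList_length (hL : 2 ≤ len lam) : (starList lam).length = len lam - 1 := by
  have hlen : (partsAsc lam).length = len lam := partsAsc_length lam
  unfold starList
  rw [List.length_append, List.length_take]
  simp
  omega

/-- partsAsc of any partition whose parts are `starParts lam`. -/
lemma partsAsc_star (hL : 2 ≤ len lam) {ls : Nat.Partition d} (hls : ls.parts = starParts lam) :
    partsAsc ls = starList lam := by
  apply partsAsc_eq_of_sorted (starList_sorted lam hL)
  rw [starList_coe lam hL, hls]

lemma len_star (hL : 2 ≤ len lam) {ls : Nat.Partition d} (hls : ls.parts = starParts lam) :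
    len ls = len lam - 1 := by
  rw [← partsAsc_length, partsAsc_star lam hL hls, starList_length lam hL]

/-- partial sums of the star list -/
lemma starList_take_low (hL : 2 ≤ len lam) {j : ℕ} (hj : j ≤ len lam - 2) :
    ((starList lam).take j).sum = ((partsAsc lam).take j).sum := by
  have hlen : (partsAsc lam).length = len lam := partsAsc_length lam
  unfold starList
  rw [List.take_append_of_le_length (by rw [List.length_take]; omega), List.take_take,
    min_eq_left hj]

lemma starList_take_all (hL : 2 ≤ len lam) {j : ℕ} (hj : len lam - 1 ≤ j) :
    ((starList lam).take j).sum = d := by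
  rw [List.take_of_length_le (by rw [starList_length lam hL]; omega), starList_sum lam hL]

/-- λ strictly superdominates λ*. -/
lemma strict_star (hd : 0 < d) (hL : 2 ≤ len lam) {ls : Nat.Partition d}
    (hls : ls.parts = starParts lam) : StrictSuperDominates lam ls := by
  constructor
  · intro j hj1 hj2
    rw [len_star lam hL hls] at hj2
    rw [partsAsc_star lam hL hls]
    rcases le_or_gt j (len lam - 2) with hle | hlt
    · rw [starList_take_low lam hL hle]
    · have hj : j = len lam - 1 := by omega
      rw [starList_take_all lam hL (by omega)]
      have := take_sum_le (partsAsc lam) j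
      rw [partsAsc_sum] at this
      exact this
  · intro h
    have := len_star lam hL hls
    rw [← h] at this
    omega

/-- Part (i) as a lemma. -/
lemma part_i (hd : 0 < d) {mu : Nat.Partition d} (hlen : len mu < len lam)
    (hdom : SuperDominates lam mu) {ls : Nat.Partition d} (hls : ls.parts = starParts lam) :
    SuperDominates ls mu := by
  have hmu1 : 1 ≤ len mu := len_pos hd mu
  have hL : 2 ≤ len lam := by omega
  intro j hj1 hj2
  rw [len_star lam hL hls] at hj2
  rw [partsAsc_star lam hL hls]
  have hjmu : j ≤ len mu := by omega
  rcases le_or_gt j (len lam - 2) with hle | hlt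
  · rw [starList_take_low lam hL hle]
    exact hdom j hj1 (by omega)
  · -- j = len lam - 1 and len mu = len lam - 1, so j = len mu
    have hj : j = len mu := by omega
    have : ((partsAsc mu).take j).sum = d := by
      rw [hj, ← partsAsc_length, List.take_length, partsAsc_sum]
    rw [this, starList_take_all lam hL (by omega)]

end Star

lemma sum_take_pred {d : ℕ} (lam : Nat.Partition d) (hL : 2 ≤ len lam) :
    ((partsAsc lam).take (len lam - 1)).sum
      = ((partsAsc lam).take (len lam - 2)).sum + topB lam := by
  have hlen : (partsAsc lam).length = len lam := partsAsc_length lam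
  have e1 : ((partsAsc lam).take ((len lam - 2) + 1)).sum
      = ((partsAsc lam).take (len lam - 2)).sum + topB lam := by
    rw [sum_take_succ_getD _ (by omega)]
    unfold topB
    rw [show (partsAsc lam).length - 2 = len lam - 2 by omega]
  rw [show (len lam - 2) + 1 = len lam - 1 from by omega] at e1
  exact e1

lemma sorted_getD_le {l : List ℕ} (hs : l.Pairwise (· ≤ ·)) {i j : ℕ} (hij : i ≤ j)
    (hj : j < l.length) : l.getD i 0 ≤ l.getD j 0 := by
  rw [List.getD_eq_getElem l 0 (lt_of_le_of_lt hij hj), List.getD_eq_getElem l 0 hj]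
  rcases eq_or_lt_of_le hij with rfl | h
  · exact le_refl _
  · exact List.pairwise_iff_getElem.mp hs i j _ hj h

lemma topA_pos {d : ℕ} (lam : Nat.Partition d) (hL : 1 ≤ len lam) : 0 < topA lam := by
  have hlen : (partsAsc lam).length = len lam := partsAsc_length lam
  unfold topA
  rw [List.getD_eq_getElem _ 0 (by omega)]
  exact partsAsc_pos lam (List.getElem_mem _)

lemma topB_pos {d : ℕ} (lam : Nat.Partition d) (hL : 2 ≤ len lam) : 0 < topB lam := by
  have hlen : (partsAsc lam).length = len lam := partsAsc_length lam
  unfold topB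
  rw [List.getD_eq_getElem _ 0 (by omega)]
  exact partsAsc_pos lam (List.getElem_mem _)

/-- the star partition exists -/
noncomputable def starPartition {d : ℕ} (lam : Nat.Partition d) (hL : 2 ≤ len lam) :
    Nat.Partition d where
  parts := starParts lam
  parts_pos := by
    intro i hi
    rw [← starList_coe lam hL, Multiset.mem_coe] at hi
    unfold starList at hi
    rw [List.mem_append] at hi
    rcases hi with hi | hi
    · exact partsAsc_pos lam (List.mem_of_mem_take hi)
    · simp only [List.mem_singleton] at hi
      subst hi
      have := topA_pos lam (by omega)
      omega
  parts_sum := by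
    rw [← starList_coe lam hL, Multiset.sum_coe, starList_sum lam hL]

lemma part_ii {d : ℕ} (hd : 0 < d) {lam mu : Nat.Partition d} (hlen : len mu < len lam)
    (hcov : SCovers lam mu) : mu.parts = starParts lam := by
  have hmu1 : 1 ≤ len mu := len_pos hd mu
  have hL : 2 ≤ len lam := by omega
  set ls := starPartition lam hL with hlsdef
  have hls : ls.parts = starParts lam := rfl
  have hstrict : StrictSuperDominates lam ls := strict_star lam hd hL hls
  have hdom : SuperDominates ls mu := part_i lam hd hlen hcov.1.1 hls
  by_cases heq : ls = mu
  · rw [← heq]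
    exact hls
  · exact absurd ⟨ls, hstrict, hdom, heq⟩ hcov.2

lemma part_iii_forward {d : ℕ} (hd : 0 < d) (lam : Nat.Partition d) (hL : 2 ≤ len lam)
    {ls : Nat.Partition d} (hls : ls.parts = starParts lam)
    (hcov : SCovers lam ls) : topA lam - topB lam ≤ 1 := by
  by_contra hab
  have hba := topB_le_topA lam hL
  have h2 : topB lam + 2 ≤ topA lam := by omega
  have hlen : (partsAsc lam).length = len lam := partsAsc_length lam
  set C := (partsAsc lam).take (len lam - 2) with hCdef
  have hC : C.length = len lam - 2 := by
    rw [hCdef, List.length_take]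
    omega
  have htot : C.sum + topB lam + topA lam = d := sum_take_sub_two lam hL
  set nuL := C ++ [topB lam + 1, topA lam - 1] with hnuLdef
  have hnuLsorted : nuL.Pairwise (· ≤ ·) := by
    rw [hnuLdef, List.pairwise_append]
    refine ⟨(partsAsc_sorted lam).sublist (List.take_sublist _ _), ?_, ?_⟩
    · refine List.pairwise_cons.mpr ⟨?_, ?_⟩
      · intro y hy
        simp only [List.mem_singleton] at hy
        omega
      · simp
    · intro x hx y hy
      have h1 := mem_take_le_topB lam hL hx
      simp only [List.mem_cons, List.not_mem_nil, or_false] at hy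
      rcases hy with rfl | rfl <;> omega
  have hnuLsum : nuL.sum = d := by
    rw [hnuLdef, List.sum_append]
    simp only [List.sum_cons, List.sum_nil]
    omega
  set nu : Nat.Partition d := ⟨(↑nuL : Multiset ℕ), by
    intro i hi
    rw [Multiset.mem_coe, hnuLdef, List.mem_append] at hi
    rcases hi with hi | hi
    · exact partsAsc_pos lam (List.mem_of_mem_take hi)
    · simp only [List.mem_cons, List.not_mem_nil, or_false] at hi
      rcases hi with rfl | rfl <;> omega, by rw [Multiset.sum_coe]; exact hnuLsum⟩ with hnudef
  have hnuAsc : partsAsc nu = nuL := partsAsc_eq_of_sorted hnuLsorted rfl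
  have hlennu : len nu = len lam := by
    rw [← partsAsc_length, hnuAsc, hnuLdef, List.length_append, hC]
    simp
    omega
  have hS2 : ∀ j ≤ len lam - 2, ((partsAsc nu).take j).sum = ((partsAsc lam).take j).sum := by
    intro j hj
    rw [hnuAsc, hnuLdef, List.take_append_of_le_length (by omega), hCdef, List.take_take,
      min_eq_left hj]
  have hS1 : ((partsAsc nu).take (len lam - 1)).sum = C.sum + (topB lam + 1) := by
    rw [hnuAsc, hnuLdef, show len lam - 1 = C.length + 1 by omega, List.take_append]
    rw [List.sum_append]
    simp
    rw [List.take_of_length_le (by omega)]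
  have hS0 : ((partsAsc nu).take (len lam)).sum = d := by
    rw [List.take_of_length_le (by rw [partsAsc_length]; omega), partsAsc_sum]
  have hSlampred : ((partsAsc lam).take (len lam - 1)).sum = C.sum + topB lam :=
    sum_take_pred lam hL
  have hstrict1 : StrictSuperDominates lam nu := by
    constructor
    · intro j hj1 hj2
      rw [hlennu, min_self] at hj2
      rcases le_or_gt j (len lam - 2) with hle | hlt
      · rw [hS2 j hle]
      · rcases le_or_gt j (len lam - 1) with hle' | hlt'
        · have hj : j = len lam - 1 := by omega
          subst hj
          rw [hS1, hSlampred]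
          omega
        · have hj : j = len lam := by omega
          subst hj
          rw [hS0, ← hlen, List.take_length, partsAsc_sum]
    · intro h
      have heq : ((partsAsc lam).take (len lam - 1)).sum
          = ((partsAsc nu).take (len lam - 1)).sum := by rw [h]
      rw [hS1, hSlampred] at heq
      omega
  have hstrict2 : StrictSuperDominates nu ls := by
    constructor
    · intro j hj1 hj2
      rw [hlennu, len_star lam hL hls] at hj2
      rw [partsAsc_star lam hL hls]
      rcases le_or_gt j (len lam - 2) with hle | hlt
      · rw [hS2 j hle, starList_take_low lam hL hle]
      · have hj : j = len lam - 1 := by omega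
        subst hj
        rw [hS1, starList_take_all lam hL (by omega)]
        omega
    · intro h
      have := len_star lam hL hls
      rw [← h, hlennu] at this
      omega
  exact hcov.2 ⟨nu, hstrict1, hstrict2⟩

lemma part_iii_backward {d : ℕ} (hd : 0 < d) (lam : Nat.Partition d) (hL : 2 ≤ len lam)
    {ls : Nat.Partition d} (hls : ls.parts = starParts lam)
    (hab : topA lam - topB lam ≤ 1) : SCovers lam ls := by
  refine ⟨strict_star lam hd hL hls, ?_⟩
  rintro ⟨nu, ⟨h1, hne1⟩, ⟨h2, hne2⟩⟩
  have hm1 : 1 ≤ len nu := len_pos hd nu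
  have hba := topB_le_topA lam hL
  have hlen : (partsAsc lam).length = len lam := partsAsc_length lam
  have hlennu : (partsAsc nu).length = len nu := partsAsc_length nu
  rcases lt_or_ge (len nu) (len lam) with hlt | hge
  · have hdom : SuperDominates ls nu := part_i lam hd hlt h1 hls
    exact hne2 (superdominates_antisymm hd h2 hdom)
  · -- len nu = len lam
    have hdL : ((partsAsc nu).take (len lam)).sum = d := by
      have hle1 : ((partsAsc lam).take (len lam)).sum ≤ ((partsAsc nu).take (len lam)).sum :=
        h1 (len lam) (by omega) (by omega)
      have he : ((partsAsc lam).take (len lam)).sum = d := by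
        rw [← hlen, List.take_length, partsAsc_sum]
      rw [he] at hle1
      have hle2 : ((partsAsc nu).take (len lam)).sum ≤ d := by
        have := take_sum_le (partsAsc nu) (len lam)
        rw [partsAsc_sum] at this
        exact this
      omega
    have hmeq : len nu = len lam := by
      by_contra hne
      have hlt : len lam < len nu := by omega
      have hlt2 : ((partsAsc nu).take (len lam)).sum < (partsAsc nu).sum :=
        take_sum_lt _ (fun x hx => partsAsc_pos nu hx) (by omega)
      rw [partsAsc_sum] at hlt2
      omega
    have hlsL : len ls = len lam - 1 := len_star lam hL hls
    -- partial sums agree for j ≤ len lam - 2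
    have hSeq : ∀ j ≤ len lam - 2, ((partsAsc nu).take j).sum = ((partsAsc lam).take j).sum := by
      intro j hj
      rcases Nat.eq_zero_or_pos j with rfl | hj1
      · simp
      have e1 : ((partsAsc lam).take j).sum ≤ ((partsAsc nu).take j).sum :=
        h1 j hj1 (by omega)
      have e2 : ((partsAsc nu).take j).sum ≤ ((partsAsc ls).take j).sum :=
        h2 j hj1 (by rw [hlsL]; omega)
      rw [partsAsc_star lam hL hls, starList_take_low lam hL hj] at e2
      omega
    set s := ((partsAsc lam).take (len lam - 2)).sum with hsdef
    have htot : s + topB lam + topA lam = d := sum_take_sub_two lam hL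
    have hSpred : ((partsAsc lam).take (len lam - 1)).sum = s + topB lam :=
      sum_take_pred lam hL
    set p := (partsAsc nu).getD (len lam - 2) 0 with hpdef
    set q := (partsAsc nu).getD (len lam - 1) 0 with hqdef
    have hnu2 : ((partsAsc nu).take (len lam - 2)).sum = s := hSeq _ le_rfl
    have hnupred : ((partsAsc nu).take (len lam - 1)).sum = s + p := by
      rw [show len lam - 1 = (len lam - 2) + 1 from by omega,
        sum_take_succ_getD _ (by omega), hnu2]
    have hnuall : ((partsAsc nu).take (len lam)).sum
        = ((partsAsc nu).take (len lam - 1)).sum + q := by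
      rw [show len lam = (len lam - 1) + 1 from by omega,
        sum_take_succ_getD _ (by omega)]
      rw [show len lam - 1 + 1 - 1 = len lam - 1 from by omega]
    have hpq : p ≤ q :=
      sorted_getD_le (partsAsc_sorted nu) (by omega) (by omega)
    have hbp : s + topB lam ≤ s + p := by
      have := h1 (len lam - 1) (by omega) (by omega)
      rw [hSpred, hnupred] at this
      exact this
    have hps : s + p ≤ d := by
      have := h2 (len lam - 1) (by omega) (by rw [hlsL]; omega)
      rw [hnupred, partsAsc_star lam hL hls, starList_take_all lam hL (by omega)] at this
      exact this
    -- p = topB, q = topA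
    have hp : p = topB lam ∧ q = topA lam := by
      constructor <;> omega
    -- now nu = lam
    apply hne1
    apply eq_of_partsAsc_eq
    apply list_eq_of_take_sums (by omega)
    intro j
    rcases le_or_gt j (len lam - 2) with hle | hlt
    · exact (hSeq j hle).symm
    rcases le_or_gt j (len lam - 1) with hle' | hlt'
    · have hj : j = len lam - 1 := by omega
      subst hj
      rw [hSpred, hnupred, hp.1]
    · rw [List.take_of_length_le (by omega), List.take_of_length_le (by omega),
        partsAsc_sum, partsAsc_sum]

/-- Properties of `λ*` with respect to superdominance:
(i) if `ℓ(λ) > ℓ(μ)` and `λ ≻ μ` then `λ* ⪰ μ`;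
(ii) if `ℓ(λ) > ℓ(μ)` and `λ` covers `μ` then `μ = λ*`;
(iii) if `ℓ(λ) ≥ 2` then `λ` covers `λ*` iff `λ₁ - λ₂ ≤ 1`. -/
theorem star_superdominance_properties {d : ℕ} (hd : 0 < d) (lam mu : Nat.Partition d) :
    ((len mu < len lam ∧ StrictSuperDominates lam mu) →
      ∀ ls : Nat.Partition d, ls.parts = starParts lam → SuperDominates ls mu) ∧
    ((len mu < len lam ∧ SCovers lam mu) → mu.parts = starParts lam) ∧
    (2 ≤ len lam →
      ∀ ls : Nat.Partition d, ls.parts = starParts lam →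
        (SCovers lam ls ↔ (partsDesc lam).getD 0 0 - (partsDesc lam).getD 1 0 ≤ 1)) := by
  refine ⟨?_, ?_, ?_⟩
  · rintro ⟨hlen, hstrict⟩ ls hls
    exact part_i lam hd hlen hstrict.1 hls
  · rintro ⟨hlen, hcov⟩
    exact part_ii hd hlen hcov
  · intro hL ls hls
    rw [desc_getD_zero lam (by omega), desc_getD_one lam hL]
    constructor
    · exact part_iii_forward hd lam hL hls
    · exact part_iii_backward hd lam hL hls
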